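/- In the turn model on a 2-D grid, if all south-west and south-east turns are prohibited (south-last routing), then any path composed of moves in the four cardinal directions respecting the remaining allowed turns cannot contain a directed cycle; in particular no packet route can revisit a node, so routing is livelock-free. -/

import Mathlib

/-- The four cardinal unit moves on ℤ × ℤ. -/
inductive Dir
  | N | S | E | W
deriving DecidableEq

/-- Unit displacement vector of a move. -/
def Dir.vec : Dir → ℤ × ℤ
  | .N => (0, 1)
  | .S => (0, -1)
  | .E => (1, 0)
  | .W => (-1, 0)

/-- Opposite (180°-reversed) direction. -/
def Dir.opp : Dir → Dir
  | .N => .S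
  | .S => .N
  | .E => .W
  | .W => .E

/-- A path respects south-last routing if every move after a South move
    is also South (once it moves South it may only continue South). -/
def SouthLast (l : List Dir) : Prop :=
  ∀ i j : ℕ, ∀ hi : i < l.length, ∀ hj : j < l.length,
    i ≤ j → l.get ⟨i, hi⟩ = Dir.S → l.get ⟨j, hj⟩ = Dir.S

/-- No immediate reversals: no move is directly followed by its opposite. -/
def NoReversal (l : List Dir) : Prop :=
  List.Chain' (fun a b => b ≠ Dir.opp a) l

/-- The sequence of nodes visited by the path, starting from `s`. -/
def positions (s : ℤ × ℤ) (l : List Dir) : List (ℤ × ℤ) :=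
  l.scanl (fun p d => p + d.vec) s

namespace SLAux

abbrev SL (a b : Dir) : Prop := a = Dir.S → b = Dir.S

lemma southLast_chain' {l : List Dir} (h : SouthLast l) : List.Chain' SL l := by
  rw [List.Chain', List.isChain_iff_getElem]
  intro i hi
  exact fun hS => h i (i+1) (by omega) (by omega) (by omega) hS

lemma allS {t : List Dir} (h : List.Chain' SL (Dir.S :: t)) :
    Dir.S :: t = List.replicate (t.length + 1) Dir.S := by
  induction t with
  | nil => simp
  | cons e t ih =>
    rw [List.Chain', List.isChain_cons_cons] at h
    have he : e = Dir.S := h.1 rfl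
    subst he
    have := ih h.2
    simp [List.replicate_succ] at this ⊢
    exact this

lemma decompose {m : List Dir} (h : List.Chain' SL m) :
    ∃ p k, m = p ++ List.replicate k Dir.S ∧ Dir.S ∉ p := by
  induction m with
  | nil => exact ⟨[], 0, by simp, by simp⟩
  | cons d t ih =>
    by_cases hd : d = Dir.S
    · subst hd
      exact ⟨[], t.length + 1, by simpa using allS h, by simp⟩
    · obtain ⟨p, k, hpk, hS⟩ := ih h.tail
      refine ⟨d :: p, k, by simp [hpk], ?_⟩
      simp only [List.mem_cons, not_or]
      exact ⟨fun h => hd h.symm, hS⟩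

lemma vecsum_noW {p : List Dir} (hS : Dir.S ∉ p) (hW : Dir.W ∉ p) :
    (p.map Dir.vec).sum = ((p.count Dir.E : ℤ), (p.count Dir.N : ℤ)) := by
  induction p with
  | nil => simp; rfl
  | cons d t ih =>
    simp only [List.mem_cons, not_or] at hS hW
    have := ih hS.2 hW.2
    cases d
    · simp [this, Dir.vec, List.count_cons, Prod.ext_iff] <;> push_cast <;> ring
    · exact absurd rfl hS.1
    · simp [this, Dir.vec, List.count_cons, Prod.ext_iff] <;> push_cast <;> ring
    · exact absurd rfl hW.1

lemma vecsum_noE {p : List Dir} (hS : Dir.S ∉ p) (hE : Dir.E ∉ p) :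
    (p.map Dir.vec).sum = (-(p.count Dir.W : ℤ), (p.count Dir.N : ℤ)) := by
  induction p with
  | nil => simp; rfl
  | cons d t ih =>
    simp only [List.mem_cons, not_or] at hS hE
    have := ih hS.2 hE.2
    cases d
    · simp [this, Dir.vec, List.count_cons, Prod.ext_iff] <;> push_cast <;> ring
    · exact absurd rfl hS.1
    · exact absurd rfl hE.1
    · simp [this, Dir.vec, List.count_cons, Prod.ext_iff] <;> push_cast <;> ring

lemma all_N {p : List Dir} (hS : Dir.S ∉ p) (hW : Dir.W ∉ p)
    (hE : p.count Dir.E = 0) : ∀ x ∈ p, x = Dir.N := by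
  intro x hx
  cases x
  · rfl
  · exact absurd hx hS
  · exact absurd hx (List.count_eq_zero.mp hE)
  · exact absurd hx hW

lemma all_N' {p : List Dir} (hS : Dir.S ∉ p) (hE : Dir.E ∉ p)
    (hW : p.count Dir.W = 0) : ∀ x ∈ p, x = Dir.N := by
  intro x hx
  cases x
  · rfl
  · exact absurd hx hS
  · exact absurd hx hE
  · exact absurd hx (List.count_eq_zero.mp hW)

lemma vecsum_repS (k : ℕ) :
    ((List.replicate k Dir.S).map Dir.vec).sum = ((0 : ℤ), -(k : ℤ)) := by
  induction k with
  | zero => simp; rfl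
  | succ n ih =>
    rw [List.replicate_succ, List.map_cons, List.sum_cons, ih]
    apply Prod.ext <;> simp [Dir.vec] <;> push_cast <;> ring

lemma seg_sum_ne_zero {m : List Dir} (hm : m ≠ [])
    (hSL : List.Chain' SL m)
    (hNR : List.Chain' (fun a b => b ≠ Dir.opp a) m)
    (hEW : Dir.E ∉ m ∨ Dir.W ∉ m) :
    (m.map Dir.vec).sum ≠ 0 := by
  obtain ⟨p, k, rfl, hSp⟩ := decompose hSL
  rw [List.map_append, List.sum_append, vecsum_repS]
  -- helper to finish from "p is all N and nonempty and k > 0" → reversal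
  have junction : p ≠ [] → 0 < k → (∀ x ∈ p, x = Dir.N) → False := by
    intro hp hk hall
    obtain ⟨k', rfl⟩ : ∃ k', k = k' + 1 := ⟨k - 1, by omega⟩
    rw [List.replicate_succ, List.Chain', List.isChain_append] at hNR
    have hlast : p.getLast hp ∈ p.getLast? := by
      rw [List.getLast?_eq_getLast hp]; rfl
    have := hNR.2.2 _ hlast Dir.S (by simp)
    exact this (by rw [hall _ (List.getLast_mem hp)]; rfl)
  rcases hEW with hE | hW
  · have hEp : Dir.E ∉ p := fun h => hE (by simp [h])
    rw [vecsum_noE hSp hEp]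
    intro hzero
    rw [Prod.ext_iff] at hzero
    simp only [Prod.fst_add, Prod.snd_add, Prod.fst_zero, Prod.snd_zero] at hzero
    have hW0 : p.count Dir.W = 0 := by omega
    have hk0 : (p.count Dir.N : ℤ) = k := by omega
    rcases List.eq_nil_or_concat p with rfl | ⟨_, _, hne'⟩
    · have hk' : k = 0 := by simp at hk0; omega
      subst hk'
      simp at hm
    · have hp : p ≠ [] := by rintro rfl; simp at hne'
      have hall := all_N' hSp hEp hW0
      have hk : 0 < k := by
        rcases Nat.eq_zero_or_pos k with rfl | h
        · have hc : p.count Dir.N = 0 := by omega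
          have hnn : Dir.N ∉ p := List.count_eq_zero.mp hc
          have hd := hall _ (List.head_mem hp)
          exact absurd (hd ▸ List.head_mem hp) hnn
        · exact h
      exact junction hp hk hall
  · have hWp : Dir.W ∉ p := fun h => hW (by simp [h])
    rw [vecsum_noW hSp hWp]
    intro hzero
    rw [Prod.ext_iff] at hzero
    simp only [Prod.fst_add, Prod.snd_add, Prod.fst_zero, Prod.snd_zero] at hzero
    have hE0 : p.count Dir.E = 0 := by omega
    have hk0 : (p.count Dir.N : ℤ) = k := by omega
    rcases List.eq_nil_or_concat p with rfl | ⟨_, _, hne'⟩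
    · have hk' : k = 0 := by simp at hk0; omega
      subst hk'
      simp at hm
    · have hp : p ≠ [] := by rintro rfl; simp at hne'
      have hall := all_N hSp hWp hE0
      have hk : 0 < k := by
        rcases Nat.eq_zero_or_pos k with rfl | h
        · have hc : p.count Dir.N = 0 := by omega
          have hnn : Dir.N ∉ p := List.count_eq_zero.mp hc
          have hd := hall _ (List.head_mem hp)
          exact absurd (hd ▸ List.head_mem hp) hnn
        · exact h
      exact junction hp hk hall

lemma length_positions (s : ℤ × ℤ) (l : List Dir) :
    (positions s l).length = l.length + 1 := by
  simp [positions, List.length_scanl]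

lemma get_positions (l : List Dir) (s : ℤ × ℤ) (i : ℕ) (h : i < l.length + 1) :
    (positions s l).get ⟨i, by rw [length_positions]; omega⟩
      = s + ((l.take i).map Dir.vec).sum := by
  induction l generalizing s i with
  | nil =>
    have : i = 0 := by simp at h; omega
    subst this
    simp [positions]
  | cons d t ih =>
    have : positions s (d :: t) = s :: positions (s + d.vec) t := by
      simp [positions, List.scanl]
    cases i with
    | zero => simp [this]
    | succ n =>
      have hn : n < t.length + 1 := by simpa using h
      have := ih (s + d.vec) n hn
      simp only [positions, List.get_eq_getElem, List.scanl_cons] at this ⊢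
      simp only [List.getElem_cons_succ, this, List.take_succ_cons, List.map_cons,
        List.sum_cons]
      ring

end SLAux

open SLAux in
/-- A nonempty south-last path with no immediate reversals that moves
    monotonically (never using both East and West) cannot form a cycle:
    it never revisits any node, and in particular never returns to its
    starting node. -/
theorem southLast_no_cycle (l : List Dir) (hne : l ≠ [])
    (hsl : SouthLast l) (hnr : NoReversal l)
    (hmono : ¬(Dir.E ∈ l ∧ Dir.W ∈ l)) (s : ℤ × ℤ) :
    (positions s l).Nodup ∧ (positions s l).getLast (by cases l <;> simp [positions, List.scanl]) ≠ s := by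
  have hchain := southLast_chain' hsl
  have hEW : Dir.E ∉ l ∨ Dir.W ∉ l := by tauto
  have key : ∀ i j : ℕ, (hij : i < j) → (hj : j < l.length + 1) →
      (positions s l).get ⟨i, by rw [length_positions]; omega⟩ ≠
      (positions s l).get ⟨j, by rw [length_positions]; omega⟩ := by
    intro i j hij hj heq
    rw [get_positions l s i (by omega), get_positions l s j hj] at heq
    have hsum : ((l.take j).map Dir.vec).sum = ((l.take i).map Dir.vec).sum :=
      (add_left_cancel heq).symm
    set seg := (l.drop i).take (j - i) with hseg
    have htake : l.take j = l.take i ++ seg := by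
      rw [hseg, ← List.take_add]
      congr 1
      omega
    have hsegsum : (seg.map Dir.vec).sum = 0 := by
      rw [htake, List.map_append, List.sum_append] at hsum
      have := hsum
      -- A + X = A implies X = 0
      have h0 : ((l.take i).map Dir.vec).sum + (seg.map Dir.vec).sum
          = ((l.take i).map Dir.vec).sum + 0 := by rw [add_zero]; exact this
      exact add_left_cancel h0
    have hinfix : seg <:+: l := by
      refine ⟨l.take i, l.drop j, ?_⟩
      rw [← htake, List.take_append_drop]
    have hsegne : seg ≠ [] := by
      have hlen : seg.length = min (j - i) (l.length - i) := by
        simp [hseg]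
      intro h
      rw [h] at hlen
      simp at hlen
      omega
    exact seg_sum_ne_zero hsegne (hchain.infix hinfix) (hnr.infix hinfix)
      (by rcases hEW with h | h
          · exact Or.inl fun hx => h (hinfix.sublist.subset hx)
          · exact Or.inr fun hx => h (hinfix.sublist.subset hx)) hsegsum
  constructor
  · rw [List.nodup_iff_injective_get]
    intro ⟨a, ha⟩ ⟨b, hb⟩ hab
    rw [length_positions] at ha hb
    rcases lt_trichotomy a b with h | h | h
    · exact absurd hab (key a b h hb)
    · simpa using h
    · exact absurd hab.symm (key b a h ha)
  · have hlen : (positions s l).length = l.length + 1 := length_positions s l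
    have hgl : (positions s l).getLast (by cases l <;> simp [positions, List.scanl])
        = (positions s l).get ⟨l.length, by rw [hlen]; omega⟩ := by
      rw [List.getLast_eq_getElem]
      congr 1
      simp [hlen]
    rw [hgl]
    have h0 : (positions s l).get ⟨0, by rw [hlen]; omega⟩ = s := by
      rw [get_positions l s 0 (by omega)]
      simp
    intro h
    have hlpos : 0 < l.length := List.length_pos_iff.mpr hne
    exact key 0 l.length hlpos (by omega) (by rw [h0, h])
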